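/- arXiv:1907.11487 — 10 statements merged into one kernel-verified Lean document; each statement's English description precedes it below -/
import Mathlib

section
/- Let X be a biquandle, R a commutative ring, and (A,B) a biquandle bracket on X over R. Suppose A = A'·φ and B = B'·φ pointwise, where A', B', φ : X × X → R^×, and suppose that (A', B') satisfies biquandle bracket condition (ii) (δ' = -A'B'^{-1} - A'^{-1}B' is constant) with the same δ. If (A', B') is a biquandle bracket, then φ satisfies the 2-cocycle condition φ(x,y)·φ(y,z)·φ(x▷y, z▶y) = φ(x,z)·φ(y▶x, z▶x)·φ(x▷z, y▷z) for all x, y, z ∈ X, and φ is constant on the diagonal (φ(x,x) = φ(y,y) for all x, y). -/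
/-- A biquandle: a set with under (`ut`, x ▷ y) and over (`ot`, x ▶ y) operations. -/
structure Biquandle (X : Type*) where
  ut : X → X → X
  ot : X → X → X
  diag : ∀ x, ut x x = ot x x
  bij_ot : ∀ y, Function.Bijective (fun x => ot x y)
  bij_ut : ∀ y, Function.Bijective (fun x => ut x y)
  bij_S : Function.Bijective (fun p : X × X => (ot p.2 p.1, ut p.1 p.2))
  ex1 : ∀ x y z, ut (ut x y) (ut z y) = ut (ut x z) (ot y z)
  ex2 : ∀ x y z, ot (ut x y) (ut z y) = ut (ot x z) (ot y z)
  ex3 : ∀ x y z, ot (ot x y) (ot z y) = ot (ot x z) (ut y z)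

/-- A biquandle bracket on a biquandle `Q` with values in a commutative ring `R`. -/
structure BiquandleBracket {X : Type*} (Q : Biquandle X) (R : Type*) [CommRing R] where
  A : X → X → Rˣ
  B : X → X → Rˣ
  δ : R
  w : Rˣ
  cond1a : ∀ x, δ * (A x x : R) + (B x x : R) = (w : R)
  cond1b : ∀ x, δ * (((A x x)⁻¹ : Rˣ) : R) + (((B x x)⁻¹ : Rˣ) : R) = ((w⁻¹ : Rˣ) : R)
  cond2 : ∀ x y, δ = -(A x y : R) * (((B x y)⁻¹ : Rˣ) : R) - (((A x y)⁻¹ : Rˣ) : R) * (B x y : R)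
  cond3a : ∀ x y z, A x y * A y z * A (Q.ut x y) (Q.ot z y)
      = A x z * A (Q.ot y x) (Q.ot z x) * A (Q.ut x z) (Q.ut y z)
  cond3b : ∀ x y z, A x y * B y z * B (Q.ut x y) (Q.ot z y)
      = B x z * B (Q.ot y x) (Q.ot z x) * A (Q.ut x z) (Q.ut y z)
  cond3c : ∀ x y z, B x y * A y z * B (Q.ut x y) (Q.ot z y)
      = B x z * A (Q.ot y x) (Q.ot z x) * B (Q.ut x z) (Q.ut y z)
  cond3d : ∀ x y z, (A x y : R) * (A y z : R) * (B (Q.ut x y) (Q.ot z y) : R)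
      = (A x z : R) * (B (Q.ot y x) (Q.ot z x) : R) * (A (Q.ut x z) (Q.ut y z) : R)
      + (A x z : R) * (A (Q.ot y x) (Q.ot z x) : R) * (B (Q.ut x z) (Q.ut y z) : R)
      + δ * (A x z : R) * (B (Q.ot y x) (Q.ot z x) : R) * (B (Q.ut x z) (Q.ut y z) : R)
      + (B x z : R) * (B (Q.ot y x) (Q.ot z x) : R) * (B (Q.ut x z) (Q.ut y z) : R)
  cond3e : ∀ x y z, (B x z : R) * (A (Q.ot y x) (Q.ot z x) : R) * (A (Q.ut x z) (Q.ut y z) : R)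
      = (B x y : R) * (A y z : R) * (A (Q.ut x y) (Q.ot z y) : R)
      + (A x y : R) * (B y z : R) * (A (Q.ut x y) (Q.ot z y) : R)
      + δ * (B x y : R) * (B y z : R) * (A (Q.ut x y) (Q.ot z y) : R)
      + (B x y : R) * (B y z : R) * (B (Q.ut x y) (Q.ot z y) : R)

/-- The biquandle 2-cocycle condition for a function `φ : X × X → G`. -/
def CocycleCond {X G : Type*} [CommMonoid G] (Q : Biquandle X) (φ : X → X → G) : Prop :=
  ∀ x y z, φ x y * φ y z * φ (Q.ut x y) (Q.ot z y)
    = φ x z * φ (Q.ot y x) (Q.ot z x) * φ (Q.ut x z) (Q.ut y z)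

theorem stmt3 {X R : Type*} [CommRing R] (Q : Biquandle X)
    (Bk Bk' : BiquandleBracket Q R) (A' B' φ : X → X → Rˣ)
    (hA : ∀ x y, Bk.A x y = A' x y * φ x y)
    (hB : ∀ x y, Bk.B x y = B' x y * φ x y)
    (hA' : Bk'.A = A') (hB' : Bk'.B = B') (hδ : Bk'.δ = Bk.δ) :
    CocycleCond Q φ ∧ ∀ x y, φ x x = φ y y := by
  have diag : ∀ x, (φ x x : R) * (Bk'.w : R) = (Bk.w : R) := by
    intro x
    have hx := Bk.cond1a x
    have hx' := Bk'.cond1a x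
    rw [hA', hB', hδ] at hx'
    simp only [hA, hB, Units.val_mul] at hx
    rw [← hx, ← hx']; ring
  constructor
  · intro x y z
    have h2 := Bk'.cond3a x y z
    rw [hA'] at h2
    apply mul_left_cancel (a := A' x z * A' (Q.ot y x) (Q.ot z x) * A' (Q.ut x z) (Q.ut y z))
    conv_lhs => rw [← h2]
    simpa [hA, mul_comm, mul_left_comm, mul_assoc] using Bk.cond3a x y z
  · intro x y
    have h := (diag x).trans (diag y).symm
    have h2 := congrArg (· * ((Bk'.w⁻¹ : Rˣ) : R)) h
    simp only [mul_assoc, Units.mul_inv, mul_one] at h2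
    exact Units.ext h2
end

section
/- Let X be a biquandle, R a commutative ring, and (A,B) a biquandle bracket on X over R. Suppose A = A'·φ and B = B'·φ pointwise for functions A', B', φ : X × X → R^×, where φ satisfies the 2-cocycle condition and is constant on the diagonal. Then (A', B') is a biquandle bracket on X over R (with appropriate δ' and w'). -/
theorem stmt4 {X R : Type*} [CommRing R] (Q : Biquandle X)
    (Bk : BiquandleBracket Q R) (A' B' φ : X → X → Rˣ)
    (hA : ∀ x y, Bk.A x y = A' x y * φ x y)
    (hB : ∀ x y, Bk.B x y = B' x y * φ x y)
    (hcoc : CocycleCond Q φ)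
    (hdiag : ∀ x y, φ x x = φ y y) :
    ∃ Bk' : BiquandleBracket Q R, Bk'.A = A' ∧ Bk'.B = B' := by

  by_cases hX : Nonempty X
  · obtain ⟨x₀⟩ := hX
    refine ⟨⟨A', B', Bk.δ, Bk.w * (φ x₀ x₀)⁻¹, ?_, ?_, ?_, ?_, ?_, ?_, ?_, ?_⟩, rfl, rfl⟩
    · intro x
      have h := Bk.cond1a x
      rw [hA, hB, hdiag x x₀] at h
      have hfi : ((φ x₀ x₀ : Rˣ) : R) * ((φ x₀ x₀)⁻¹ : Rˣ) = 1 := Units.mul_inv _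
      push_cast at h ⊢
      linear_combination (((φ x₀ x₀)⁻¹ : Rˣ) : R) * h -
        (Bk.δ * ((A' x x : Rˣ) : R) + ((B' x x : Rˣ) : R)) * hfi
    · intro x
      have h := Bk.cond1b x
      rw [hA, hB, hdiag x x₀] at h
      simp only [mul_inv, inv_inv] at h ⊢
      have hfi : (((φ x₀ x₀)⁻¹ : Rˣ) : R) * ((φ x₀ x₀ : Rˣ) : R) = 1 := Units.inv_mul _
      push_cast at h ⊢
      linear_combination ((φ x₀ x₀ : Rˣ) : R) * h -
        (Bk.δ * (((A' x x)⁻¹ : Rˣ) : R) + (((B' x x)⁻¹ : Rˣ) : R)) * hfi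
    · intro x y
      have h := Bk.cond2 x y
      rw [hA, hB] at h
      simp only [mul_inv] at h
      have hfi : ((φ x y : Rˣ) : R) * (((φ x y)⁻¹ : Rˣ) : R) = 1 := Units.mul_inv _
      push_cast at h ⊢
      linear_combination h - (((A' x y : Rˣ) : R) * (((B' x y)⁻¹ : Rˣ) : R) +
        (((A' x y)⁻¹ : Rˣ) : R) * ((B' x y : Rˣ) : R)) * hfi
    · intro x y z
      have h := Bk.cond3a x y z
      simp only [hA] at h
      have hc := hcoc x y z
      have hfi : ((φ x y * φ y z * φ (Q.ut x y) (Q.ot z y) : Rˣ) : R) *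
          (((φ x y * φ y z * φ (Q.ut x y) (Q.ot z y))⁻¹ : Rˣ) : R) = 1 := Units.mul_inv _
      rw [Units.ext_iff] at h hc ⊢
      push_cast at h hc hfi ⊢
      set pi := (((φ x y * φ y z * φ (Q.ut x y) (Q.ot z y))⁻¹ : Rˣ) : R)
      linear_combination pi * h +
        (((A' x z : Rˣ) : R) * ((A' (Q.ot y x) (Q.ot z x) : Rˣ) : R) * ((A' (Q.ut x z) (Q.ut y z) : Rˣ) : R)
          - ((A' x y : Rˣ) : R) * ((A' y z : Rˣ) : R) * ((A' (Q.ut x y) (Q.ot z y) : Rˣ) : R)) * hfi -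
        ((A' x z : Rˣ) : R) * ((A' (Q.ot y x) (Q.ot z x) : Rˣ) : R) * ((A' (Q.ut x z) (Q.ut y z) : Rˣ) : R) * pi * hc
    · intro x y z
      have h := Bk.cond3b x y z
      simp only [hA, hB] at h
      have hc := hcoc x y z
      have hfi : ((φ x y * φ y z * φ (Q.ut x y) (Q.ot z y) : Rˣ) : R) *
          (((φ x y * φ y z * φ (Q.ut x y) (Q.ot z y))⁻¹ : Rˣ) : R) = 1 := Units.mul_inv _
      rw [Units.ext_iff] at h hc ⊢
      push_cast at h hc hfi ⊢
      set pi := (((φ x y * φ y z * φ (Q.ut x y) (Q.ot z y))⁻¹ : Rˣ) : R)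
      linear_combination pi * h + ((((B' x z : Rˣ) : R) * ((B' (Q.ot y x) (Q.ot z x) : Rˣ) : R) * ((A' (Q.ut x z) (Q.ut y z) : Rˣ) : R)) - (((A' x y : Rˣ) : R) * ((B' y z : Rˣ) : R) * ((B' (Q.ut x y) (Q.ot z y) : Rˣ) : R))) * hfi - (((B' x z : Rˣ) : R) * ((B' (Q.ot y x) (Q.ot z x) : Rˣ) : R) * ((A' (Q.ut x z) (Q.ut y z) : Rˣ) : R)) * pi * hc
    · intro x y z
      have h := Bk.cond3c x y z
      simp only [hA, hB] at h
      have hc := hcoc x y z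
      have hfi : ((φ x y * φ y z * φ (Q.ut x y) (Q.ot z y) : Rˣ) : R) *
          (((φ x y * φ y z * φ (Q.ut x y) (Q.ot z y))⁻¹ : Rˣ) : R) = 1 := Units.mul_inv _
      rw [Units.ext_iff] at h hc ⊢
      push_cast at h hc hfi ⊢
      set pi := (((φ x y * φ y z * φ (Q.ut x y) (Q.ot z y))⁻¹ : Rˣ) : R)
      linear_combination pi * h + ((((B' x z : Rˣ) : R) * ((A' (Q.ot y x) (Q.ot z x) : Rˣ) : R) * ((B' (Q.ut x z) (Q.ut y z) : Rˣ) : R)) - (((B' x y : Rˣ) : R) * ((A' y z : Rˣ) : R) * ((B' (Q.ut x y) (Q.ot z y) : Rˣ) : R))) * hfi - (((B' x z : Rˣ) : R) * ((A' (Q.ot y x) (Q.ot z x) : Rˣ) : R) * ((B' (Q.ut x z) (Q.ut y z) : Rˣ) : R)) * pi * hc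
    · intro x y z
      have h := Bk.cond3d x y z
      simp only [hA, hB] at h
      have hc := hcoc x y z
      have hfi : ((φ x y * φ y z * φ (Q.ut x y) (Q.ot z y) : Rˣ) : R) *
          (((φ x y * φ y z * φ (Q.ut x y) (Q.ot z y))⁻¹ : Rˣ) : R) = 1 := Units.mul_inv _
      rw [Units.ext_iff] at hc
      push_cast at h hc hfi ⊢
      set pi := (((φ x y * φ y z * φ (Q.ut x y) (Q.ot z y))⁻¹ : Rˣ) : R)
      linear_combination pi * h + (((((A' x z : Rˣ) : R) * ((B' (Q.ot y x) (Q.ot z x) : Rˣ) : R) * ((A' (Q.ut x z) (Q.ut y z) : Rˣ) : R)) + (((A' x z : Rˣ) : R) * ((A' (Q.ot y x) (Q.ot z x) : Rˣ) : R) * ((B' (Q.ut x z) (Q.ut y z) : Rˣ) : R)) + (Bk.δ * ((A' x z : Rˣ) : R) * ((B' (Q.ot y x) (Q.ot z x) : Rˣ) : R) * ((B' (Q.ut x z) (Q.ut y z) : Rˣ) : R)) + (((B' x z : Rˣ) : R) * ((B' (Q.ot y x) (Q.ot z x) : Rˣ) : R) * ((B' (Q.ut x z) (Q.ut y z) : Rˣ)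 : R))) - (((A' x y : Rˣ) : R) * ((A' y z : Rˣ) : R) * ((B' (Q.ut x y) (Q.ot z y) : Rˣ) : R))) * hfi - ((((A' x z : Rˣ) : R) * ((B' (Q.ot y x) (Q.ot z x) : Rˣ) : R) * ((A' (Q.ut x z) (Q.ut y z) : Rˣ) : R)) + (((A' x z : Rˣ) : R) * ((A' (Q.ot y x) (Q.ot z x) : Rˣ) : R) * ((B' (Q.ut x z) (Q.ut y z) : Rˣ) : R)) + (Bk.δ * ((A' x z : Rˣ) : R) * ((B' (Q.ot y x) (Q.ot z x) : Rˣ) : R) * ((B' (Q.ut x z) (Q.ut y z) : Rˣ) : R)) + (((B' x z : Rˣ) : R) * ((B' (Q.ot y x) (Q.ot z x) : Rˣ) : R) * ((B' (Q.ut x z) (Q.ut y z) : Rˣ) : R))) * pi * hc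
    · intro x y z
      have h := Bk.cond3e x y z
      simp only [hA, hB] at h
      have hc := hcoc x y z
      have hfi : ((φ x z * φ (Q.ot y x) (Q.ot z x) * φ (Q.ut x z) (Q.ut y z) : Rˣ) : R) *
          (((φ x z * φ (Q.ot y x) (Q.ot z x) * φ (Q.ut x z) (Q.ut y z))⁻¹ : Rˣ) : R) = 1 := Units.mul_inv _
      rw [Units.ext_iff] at hc
      push_cast at h hc hfi ⊢
      set pi := (((φ x z * φ (Q.ot y x) (Q.ot z x) * φ (Q.ut x z) (Q.ut y z))⁻¹ : Rˣ) : R)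
      linear_combination pi * h + (((((B' x y : Rˣ) : R) * ((A' y z : Rˣ) : R) * ((A' (Q.ut x y) (Q.ot z y) : Rˣ) : R)) + (((A' x y : Rˣ) : R) * ((B' y z : Rˣ) : R) * ((A' (Q.ut x y) (Q.ot z y) : Rˣ) : R)) + (Bk.δ * ((B' x y : Rˣ) : R) * ((B' y z : Rˣ) : R) * ((A' (Q.ut x y) (Q.ot z y) : Rˣ) : R)) + (((B' x y : Rˣ) : R) * ((B' y z : Rˣ) : R) * ((B' (Q.ut x y) (Q.ot z y) : Rˣ) : R))) - (((B' x z : Rˣ) : R) * ((A' (Q.ot y x) (Q.ot z x) : Rˣ) : R) * ((A' (Q.ut x z) (Q.ut y z) : Rˣ) : R))) * hfi + ((((B' x y : Rˣ) : R) * ((A' y z : Rˣ) : R) * ((A' (Q.ut x y) (Q.ot z y) : Rˣ) : R)) + (((A' x y : Rˣ) : R) * ((B' y z : Rˣ) : R) * ((A' (Q.ut x y) (Q.ot z y) : Rˣ) : R)) + (Bk.δ * ((B' x y : Rˣ) : R) * ((B' y z : Rˣ) : R) * ((A' (Q.ut x y) (Q.ot z y) : Rˣ) : R)) + (((B' x y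 : Rˣ) : R) * ((B' y z : Rˣ) : R) * ((B' (Q.ut x y) (Q.ot z y) : Rˣ) : R))) * pi * hc
  · exact ⟨⟨A', B', Bk.δ, Bk.w,
      fun x => absurd ⟨x⟩ hX, fun x => absurd ⟨x⟩ hX, fun x _ => absurd ⟨x⟩ hX,
      fun x _ _ => absurd ⟨x⟩ hX, fun x _ _ => absurd ⟨x⟩ hX, fun x _ _ => absurd ⟨x⟩ hX,
      fun x _ _ => absurd ⟨x⟩ hX, fun x _ _ => absurd ⟨x⟩ hX⟩, rfl, rfl⟩
end

section
/- Let (A,B) be a biquandle bracket on a biquandle X over a commutative ring R such that the ratio A_{x,y} B_{x,y}^{-1} is the same for all x, y ∈ X. Fix x₀ ∈ X and set a = A_{x₀,x₀}, b = B_{x₀,x₀}. Then the function φ(x,y) := a^{-1} A_{x,y} satisfies φ(x,y) = b^{-1} B_{x,y}, is constant on the diagonal, and satisfies the biquandle 2-cocycle condition. -/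
theorem stmt5 {X R : Type*} [CommRing R] (Q : Biquandle X) (Bk : BiquandleBracket Q R)
    (hratio : ∀ x y x' y', Bk.A x y * (Bk.B x y)⁻¹ = Bk.A x' y' * (Bk.B x' y')⁻¹)
    (x₀ : X) :
    (∀ x y, (Bk.A x₀ x₀)⁻¹ * Bk.A x y = (Bk.B x₀ x₀)⁻¹ * Bk.B x y) ∧
    (∀ x y, (Bk.A x₀ x₀)⁻¹ * Bk.A x x = (Bk.A x₀ x₀)⁻¹ * Bk.A y y) ∧
    CocycleCond Q (fun x y => (Bk.A x₀ x₀)⁻¹ * Bk.A x y) := by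
  set a := Bk.A x₀ x₀ with ha
  set b := Bk.B x₀ x₀ with hb
  have part1 : ∀ x y, a⁻¹ * Bk.A x y = b⁻¹ * Bk.B x y := by
    intro x y
    have h := hratio x y x₀ x₀
    have h2 : Bk.A x y = a * b⁻¹ * Bk.B x y := by rw [← h]; group
    rw [h2]; group
  refine ⟨part1, ?_, ?_⟩
  · -- constant on the diagonal : show A x x = a for all x
    have key : ∀ x, Bk.A x x = a := by
      intro x
      have h1 := part1 x x
      have hB : (Bk.B x x : R) = (b : R) * ((a⁻¹ : Rˣ) : R) * (Bk.A x x : R) := by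
        have : Bk.B x x = b * (a⁻¹ * Bk.A x x) := by rw [h1]; group
        rw [this]; push_cast; ring
      have c0 := Bk.cond1a x₀
      have c1 := Bk.cond1a x
      have hE3 : (a : R) * ((a⁻¹ : Rˣ) : R) = 1 := a.mul_inv
      have hc : (Bk.A x x : R) * ((Bk.w : R) * ((a⁻¹ : Rˣ) : R))
          = (a : R) * ((Bk.w : R) * ((a⁻¹ : Rˣ) : R)) := by
        linear_combination (-(((Bk.A x x : R)) * ((a⁻¹ : Rˣ) : R))) * c0 + c1 - hB
          + (Bk.δ * (Bk.A x x : R) - (Bk.w : R)) * hE3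
      have hu : (Bk.A x x : R) * ((Bk.w * a⁻¹ : Rˣ) : R) = (a : R) * ((Bk.w * a⁻¹ : Rˣ) : R) := by
        push_cast; rw [← mul_assoc, ← mul_assoc] at hc ⊢
        simpa [mul_assoc] using hc
      exact Units.ext ((Bk.w * a⁻¹).isUnit.mul_right_cancel hu)
    intro x y; rw [key x, key y]
  · intro x y z
    have h := Bk.cond3a x y z
    have e : (a⁻¹ * Bk.A x y) * (a⁻¹ * Bk.A y z) * (a⁻¹ * Bk.A (Q.ut x y) (Q.ot z y))
        = a⁻¹ * a⁻¹ * a⁻¹ * (Bk.A x y * Bk.A y z * Bk.A (Q.ut x y) (Q.ot z y)) := by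
      simp [mul_comm, mul_left_comm, mul_assoc]
    have e' : (a⁻¹ * Bk.A x z) * (a⁻¹ * Bk.A (Q.ot y x) (Q.ot z x))
          * (a⁻¹ * Bk.A (Q.ut x z) (Q.ut y z))
        = a⁻¹ * a⁻¹ * a⁻¹
          * (Bk.A x z * Bk.A (Q.ot y x) (Q.ot z x) * Bk.A (Q.ut x z) (Q.ut y z)) := by
      simp [mul_comm, mul_left_comm, mul_assoc]
    simp only [e, e', h]
end

section
/- Let X be a biquandle and (A,B) a biquandle bracket on X over an integral domain R. Fix x₀, y₀ ∈ X and let a = A_{x₀,y₀}, b = B_{x₀,y₀}. Then there exists a function ψ : X × X → R^× such that for every x, y ∈ X, either (A_{x,y} = a·ψ(x,y) and B_{x,y} = b·ψ(x,y)) or (A_{x,y} = b·ψ(x,y) and B_{x,y} = a·ψ(x,y)). -/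
lemma key_units {R : Type*} [CommRing R] [IsDomain R] (u v : Rˣ)
    (h : (u : R) + ((u⁻¹ : Rˣ) : R) = (v : R) + ((v⁻¹ : Rˣ) : R)) : v = u ∨ v = u⁻¹ := by
  have h1 : (u : R) * ((u⁻¹ : Rˣ) : R) = 1 := u.mul_inv
  have h2 : (v : R) * ((v⁻¹ : Rˣ) : R) = 1 := v.mul_inv
  have h3 : ((v : R) - u) * ((u : R) * v - 1) = 0 := by
    linear_combination (-(u : R) * v) * h + ((v : R)) * h1 - ((u : R)) * h2
  rcases mul_eq_zero.1 h3 with h4 | h4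
  · left; exact Units.ext (sub_eq_zero.1 h4)
  · right
    have : u * v = 1 := Units.ext (by simpa using sub_eq_zero.1 h4)
    exact (inv_eq_of_mul_eq_one_right this).symm

theorem stmt6 {X R : Type*} [CommRing R] [IsDomain R] (Q : Biquandle X)
    (Bk : BiquandleBracket Q R) (x₀ y₀ : X) :
    ∃ ψ : X → X → Rˣ, ∀ x y,
      (Bk.A x y = Bk.A x₀ y₀ * ψ x y ∧ Bk.B x y = Bk.B x₀ y₀ * ψ x y) ∨
      (Bk.A x y = Bk.B x₀ y₀ * ψ x y ∧ Bk.B x y = Bk.A x₀ y₀ * ψ x y) := by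
  classical
  set a := Bk.A x₀ y₀ with ha
  set b := Bk.B x₀ y₀ with hb
  refine ⟨fun x y => if Bk.A x y * (Bk.B x y)⁻¹ = a * b⁻¹ then a⁻¹ * Bk.A x y
      else b⁻¹ * Bk.A x y, fun x y => ?_⟩
  by_cases hP : Bk.A x y * (Bk.B x y)⁻¹ = a * b⁻¹
  · left
    simp only [if_pos hP]
    refine ⟨by group, ?_⟩
    rw [mul_inv_eq_iff_eq_mul] at hP
    rw [hP]; group
  · have hsum : ((a * b⁻¹ : Rˣ) : R) + (((a * b⁻¹)⁻¹ : Rˣ) : R)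
        = ((Bk.A x y * (Bk.B x y)⁻¹ : Rˣ) : R) + (((Bk.A x y * (Bk.B x y)⁻¹)⁻¹ : Rˣ) : R) := by
      have e1 := Bk.cond2 x₀ y₀
      have e2 := Bk.cond2 x y
      simp only [mul_inv_rev, inv_inv, Units.val_mul, ← ha, ← hb] at *
      linear_combination e1 - e2
    rcases key_units _ _ hsum with hv | hv
    · exact absurd hv hP
    · right
      simp only [if_neg hP]
      have hv' : Bk.A x y * (Bk.B x y)⁻¹ = b * a⁻¹ := by rw [hv]; group
      refine ⟨by group, ?_⟩
      rw [mul_inv_eq_iff_eq_mul] at hv'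
      rw [hv']; group
end

section
/- Let X be a biquandle and (A,B) a biquandle bracket on X over an integral domain R. If there exist x₀, y₀ ∈ X with A_{x₀,y₀} = B_{x₀,y₀}, then A_{x,y} = B_{x,y} for all x, y ∈ X. -/
theorem stmt7 {X R : Type*} [CommRing R] [IsDomain R] (Q : Biquandle X)
    (Bk : BiquandleBracket Q R) (x₀ y₀ : X)
    (h : Bk.A x₀ y₀ = Bk.B x₀ y₀) :
    ∀ x y, Bk.A x y = Bk.B x y := by
  have hδ : Bk.δ = -2 := by
    have h2 := Bk.cond2 x₀ y₀
    rw [h] at h2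
    have hb : ((Bk.B x₀ y₀ : R)) * (((Bk.B x₀ y₀)⁻¹ : Rˣ) : R) = 1 := Units.mul_inv _
    have hb' : (((Bk.B x₀ y₀)⁻¹ : Rˣ) : R) * ((Bk.B x₀ y₀ : R)) = 1 := Units.inv_mul _
    linear_combination h2 - hb - hb'
  intro x y
  have h2 := Bk.cond2 x y
  rw [hδ] at h2
  set a := (Bk.A x y : R) with ha_def
  set b := (Bk.B x y : R) with hb_def
  have ha : a * (((Bk.A x y)⁻¹ : Rˣ) : R) = 1 := Units.mul_inv _
  have hb : (((Bk.B x y)⁻¹ : Rˣ) : R) * b = 1 := Units.inv_mul _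
  have key : (a - b) ^ 2 = 0 := by
    linear_combination (a * b) * h2 - a ^ 2 * hb - b ^ 2 * ha
  have hab : a = b := sub_eq_zero.mp (by
    exact pow_eq_zero_iff (two_ne_zero) |>.mp key)
  exact Units.ext hab
end

section
/- Let (A,B) be a biquandle bracket on a biquandle X over a commutative ring R with A_{x,y} = B_{x,y} for all x, y ∈ X. Then the function φ(x,y) = A_{x₀,x₀}^{-1} A_{x,y} (for any fixed x₀) is a biquandle 2-cocycle, i.e., φ(x,x) = 1 for all x and φ satisfies the 2-cocycle condition. -/
theorem stmt8 {X R : Type*} [CommRing R] (Q : Biquandle X) (Bk : BiquandleBracket Q R)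
    (hAB : ∀ x y, Bk.A x y = Bk.B x y) (x₀ : X) :
    (∀ x, (Bk.A x₀ x₀)⁻¹ * Bk.A x x = 1) ∧
    CocycleCond Q (fun x y => (Bk.A x₀ x₀)⁻¹ * Bk.A x y) := by
  have hδ : Bk.δ = -2 := by
    have h := Bk.cond2 x₀ x₀
    rw [← hAB] at h
    simp [Units.mul_inv, Units.inv_mul] at h
    rw [h]; ring
  have hdiag : ∀ x, (Bk.A x x : R) = -(Bk.w : R) := by
    intro x
    have h := Bk.cond1a x
    rw [← hAB, hδ] at h
    linear_combination -h
  have hconst : ∀ x, Bk.A x x = Bk.A x₀ x₀ := by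
    intro x
    ext
    rw [hdiag x, hdiag x₀]
  constructor
  · intro x
    rw [hconst x, inv_mul_cancel]
  · intro x y z
    have h := Bk.cond3a x y z
    simp only []
    calc (Bk.A x₀ x₀)⁻¹ * Bk.A x y * ((Bk.A x₀ x₀)⁻¹ * Bk.A y z) *
          ((Bk.A x₀ x₀)⁻¹ * Bk.A (Q.ut x y) (Q.ot z y))
        = (Bk.A x₀ x₀)⁻¹ * ((Bk.A x₀ x₀)⁻¹ * (Bk.A x₀ x₀)⁻¹) * (Bk.A x y * Bk.A y z * Bk.A (Q.ut x y) (Q.ot z y)) := by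
          ac_rfl
      _ = (Bk.A x₀ x₀)⁻¹ * ((Bk.A x₀ x₀)⁻¹ * (Bk.A x₀ x₀)⁻¹) * (Bk.A x z * Bk.A (Q.ot y x) (Q.ot z x) *
            Bk.A (Q.ut x z) (Q.ut y z)) := by rw [h]
      _ = (Bk.A x₀ x₀)⁻¹ * Bk.A x z * ((Bk.A x₀ x₀)⁻¹ * Bk.A (Q.ot y x) (Q.ot z x)) *
          ((Bk.A x₀ x₀)⁻¹ * Bk.A (Q.ut x z) (Q.ut y z)) := by ac_rfl
end

section
/- Let (A,B) be a biquandle bracket on a biquandle X. Then for all x, y ∈ X: A_{x,x} = A_{x▷y, x▷y} = A_{x▶y, x▶y}. -/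
theorem stmt9 {X R : Type*} [CommRing R] (Q : Biquandle X) (Bk : BiquandleBracket Q R)
    (x y : X) :
    Bk.A x x = Bk.A (Q.ut x y) (Q.ut x y) ∧ Bk.A x x = Bk.A (Q.ot x y) (Q.ot x y) := by
  constructor
  · have h := Bk.cond3a x x y
    rw [Q.diag] at h
    have h' : Bk.A x x * (Bk.A x y * Bk.A (Q.ot x x) (Q.ot y x))
        = Bk.A (Q.ut x y) (Q.ut x y) * (Bk.A x y * Bk.A (Q.ot x x) (Q.ot y x)) := by
      rw [← mul_assoc, h]
      exact mul_comm _ _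
    exact mul_right_cancel h'
  · have h := Bk.cond3a y x x
    rw [← Q.diag] at h
    have h' : Bk.A x x * (Bk.A y x * Bk.A (Q.ut y x) (Q.ut x x))
        = Bk.A (Q.ot x y) (Q.ot x y) * (Bk.A y x * Bk.A (Q.ut y x) (Q.ut x x)) := by
      calc Bk.A x x * (Bk.A y x * Bk.A (Q.ut y x) (Q.ut x x))
          = Bk.A y x * Bk.A x x * Bk.A (Q.ut y x) (Q.ut x x) := by
            rw [← mul_assoc, mul_comm (Bk.A x x) (Bk.A y x)]
        _ = Bk.A y x * Bk.A (Q.ot x y) (Q.ot x y) * Bk.A (Q.ut y x) (Q.ut x x) := h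
        _ = Bk.A (Q.ot x y) (Q.ot x y) * (Bk.A y x * Bk.A (Q.ut y x) (Q.ut x x)) := by
            rw [mul_comm (Bk.A y x) (Bk.A (Q.ot x y) (Q.ot x y)), mul_assoc]
    exact mul_right_cancel h'
end

section
/- Let (A,B) be a biquandle bracket on a biquandle X over a commutative ring R. Then for all x, y ∈ X: B_{x,x} = B_{x▷y, x▷y} = B_{x▶y, x▶y}. -/
section Aux
variable {X R : Type*} [CommRing R] (Q : Biquandle X) (Bk : BiquandleBracket Q R)

lemma A_ut (x y : X) : Bk.A x x = Bk.A (Q.ut x y) (Q.ut x y) := by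
  have h := Bk.cond3a x x y
  rw [Q.diag] at h
  have h' : Bk.A x x * (Bk.A x y * Bk.A (Q.ot x x) (Q.ot y x))
      = Bk.A (Q.ut x y) (Q.ut x y) * (Bk.A x y * Bk.A (Q.ot x x) (Q.ot y x)) := by
    rw [← mul_assoc, h, mul_comm (Bk.A (Q.ut x y) (Q.ut x y))]
  exact mul_right_cancel h'

lemma A_ot (x y : X) : Bk.A x x = Bk.A (Q.ot x y) (Q.ot x y) := by
  have h := Bk.cond3a y x x
  rw [← Q.diag] at h
  have h' : Bk.A x x * (Bk.A y x * Bk.A (Q.ut y x) (Q.ut x x))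
      = Bk.A (Q.ot x y) (Q.ot x y) * (Bk.A y x * Bk.A (Q.ut y x) (Q.ut x x)) := by
    calc Bk.A x x * (Bk.A y x * Bk.A (Q.ut y x) (Q.ut x x))
        = Bk.A y x * Bk.A x x * Bk.A (Q.ut y x) (Q.ut x x) := by
          rw [← mul_assoc, mul_comm (Bk.A x x)]
      _ = Bk.A y x * Bk.A (Q.ot x y) (Q.ot x y) * Bk.A (Q.ut y x) (Q.ut x x) := h
      _ = _ := by rw [mul_comm (Bk.A y x), mul_assoc]
  exact mul_right_cancel h'

lemma wB_eq (z : X) : (Bk.w : R) * (Bk.B z z : R) = -(Bk.A z z : R) ^ 2 := by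
  have h1 := Bk.cond1a z
  have h2 := Bk.cond2 z z
  have hA : (((Bk.A z z)⁻¹ : Rˣ) : R) * (Bk.A z z : R) = 1 := by
    exact_mod_cast Units.inv_mul (Bk.A z z)
  have hB : (((Bk.B z z)⁻¹ : Rˣ) : R) * (Bk.B z z : R) = 1 := by
    exact_mod_cast Units.inv_mul (Bk.B z z)
  linear_combination -(Bk.B z z : R) * h1 + (Bk.A z z : R) * (Bk.B z z : R) * h2
    - (Bk.A z z : R) ^ 2 * hB - (Bk.B z z : R) ^ 2 * hA

lemma B_of_A {a b : X} (h : Bk.A a a = Bk.A b b) : Bk.B a a = Bk.B b b := by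
  have hw : (Bk.w : R) * (Bk.B a a : R) = (Bk.w : R) * (Bk.B b b : R) := by
    rw [wB_eq, wB_eq, h]
  have := congrArg (fun t => ((Bk.w⁻¹ : Rˣ) : R) * t) hw
  simp only [← mul_assoc, Units.inv_mul, one_mul] at this
  exact Units.ext this

end Aux

theorem stmt10 {X R : Type*} [CommRing R] (Q : Biquandle X) (Bk : BiquandleBracket Q R)
    (x y : X) :
    Bk.B x x = Bk.B (Q.ut x y) (Q.ut x y) ∧ Bk.B x x = Bk.B (Q.ot x y) (Q.ot x y) := by
  exact ⟨B_of_A Q Bk (A_ut Q Bk x y), B_of_A Q Bk (A_ot Q Bk x y)⟩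
end

section
/- Call a biquandle X semi-transitive if there exists x ∈ X such that every element of X is of the form x ▷ y or x ▶ y for some y ∈ X. If X is semi-transitive and (A,B) is a biquandle bracket on X, then A_{y,y} = A_{z,z} for all y, z ∈ X (A is constant on the diagonal). -/
theorem stmt11 {X R : Type*} [CommRing R] (Q : Biquandle X) (Bk : BiquandleBracket Q R)
    (hst : ∃ x : X, ∀ z : X, (∃ y, Q.ut x y = z) ∨ (∃ y, Q.ot x y = z)) :
    ∀ y z : X, Bk.A y y = Bk.A z z := by
  have hut : ∀ x z : X, Bk.A x x = Bk.A (Q.ut x z) (Q.ut x z) := by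
    intro x z
    have h := Bk.cond3a x x z
    rw [Q.diag x] at h
    refine mul_left_cancel (a := Bk.A x z * Bk.A (Q.ot x x) (Q.ot z x)) ?_
    calc Bk.A x z * Bk.A (Q.ot x x) (Q.ot z x) * Bk.A x x
        = Bk.A x x * Bk.A x z * Bk.A (Q.ot x x) (Q.ot z x) := by ac_rfl
      _ = Bk.A x z * Bk.A (Q.ot x x) (Q.ot z x) * Bk.A (Q.ut x z) (Q.ut x z) := h
  have hot : ∀ x w : X, Bk.A x x = Bk.A (Q.ot x w) (Q.ot x w) := by
    intro x w
    have h := Bk.cond3a w x x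
    rw [Q.diag x] at h
    refine mul_left_cancel (a := Bk.A w x * Bk.A (Q.ut w x) (Q.ot x x)) ?_
    calc Bk.A w x * Bk.A (Q.ut w x) (Q.ot x x) * Bk.A x x
        = Bk.A w x * Bk.A x x * Bk.A (Q.ut w x) (Q.ot x x) := by ac_rfl
      _ = Bk.A w x * Bk.A (Q.ot x w) (Q.ot x w) * Bk.A (Q.ut w x) (Q.ot x x) := h
      _ = Bk.A w x * Bk.A (Q.ut w x) (Q.ot x x) * Bk.A (Q.ot x w) (Q.ot x w) := by ac_rfl
  obtain ⟨x, hx⟩ := hst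
  have key : ∀ z : X, Bk.A z z = Bk.A x x := by
    intro z
    rcases hx z with ⟨y, hy⟩ | ⟨y, hy⟩
    · rw [← hy, ← hut]
    · rw [← hy, ← hot]
  intro y z
  rw [key y, key z]
end

section
/- Call a biquandle X semi-transitive if there exists x ∈ X with {x ▷ y : y ∈ X} ∪ {x ▶ y : y ∈ X} = X. If X is a semi-transitive biquandle and (A,B) is a biquandle bracket on X over a commutative ring R, then the function φ(x,y) = A_{x₀,x₀}^{-1} A_{x,y} (for any fixed x₀ ∈ X) is a biquandle 2-cocycle with values in R^×. -/
theorem stmt12 {X R : Type*} [CommRing R] (Q : Biquandle X) (Bk : BiquandleBracket Q R)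
    (hst : ∃ x : X, ∀ z : X, (∃ y, Q.ut x y = z) ∨ (∃ y, Q.ot x y = z))
    (x₀ : X) :
    (∀ x, (Bk.A x₀ x₀)⁻¹ * Bk.A x x = 1) ∧
    CocycleCond Q (fun x y => (Bk.A x₀ x₀)⁻¹ * Bk.A x y) := by
  -- Lemma: A x x = A (ut x z) (ut x z)
  have hut : ∀ x z, Bk.A x x = Bk.A (Q.ut x z) (Q.ut x z) := by
    intro x z
    have h := Bk.cond3a x x z
    rw [Q.diag x] at h
    have h' : Bk.A x x * (Bk.A x z * Bk.A (Q.ot x x) (Q.ot z x))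
        = Bk.A (Q.ut x z) (Q.ut x z) * (Bk.A x z * Bk.A (Q.ot x x) (Q.ot z x)) := by
      calc Bk.A x x * (Bk.A x z * Bk.A (Q.ot x x) (Q.ot z x))
          = Bk.A x x * Bk.A x z * Bk.A (Q.ot x x) (Q.ot z x) := by rw [mul_assoc]
        _ = Bk.A x z * Bk.A (Q.ot x x) (Q.ot z x) * Bk.A (Q.ut x z) (Q.ut x z) := h
        _ = _ := mul_comm _ _
    exact mul_right_cancel h'
  have hot : ∀ y x, Bk.A y y = Bk.A (Q.ot y x) (Q.ot y x) := by
    intro y x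
    have h := Bk.cond3a x y y
    rw [Q.diag y] at h
    have h' : Bk.A y y * (Bk.A x y * Bk.A (Q.ut x y) (Q.ot y y))
        = Bk.A (Q.ot y x) (Q.ot y x) * (Bk.A x y * Bk.A (Q.ut x y) (Q.ot y y)) := by
      calc Bk.A y y * (Bk.A x y * Bk.A (Q.ut x y) (Q.ot y y))
          = Bk.A x y * Bk.A y y * Bk.A (Q.ut x y) (Q.ot y y) := by
            rw [← mul_assoc, mul_comm (Bk.A y y)]
        _ = Bk.A x y * Bk.A (Q.ot y x) (Q.ot y x) * Bk.A (Q.ut x y) (Q.ot y y) := h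
        _ = _ := by rw [mul_comm (Bk.A x y), mul_assoc]
    exact mul_right_cancel h'
  obtain ⟨c, hc⟩ := hst
  have hconst : ∀ z, Bk.A z z = Bk.A c c := by
    intro z
    rcases hc z with ⟨y, hy⟩ | ⟨y, hy⟩
    · rw [← hy, ← hut]
    · rw [← hy, ← hot]
  constructor
  · intro x
    rw [hconst x, ← hconst x₀, inv_mul_cancel]
  · intro x y z
    have h := Bk.cond3a x y z
    simp only []
    set u := (Bk.A x₀ x₀)⁻¹
    calc u * Bk.A x y * (u * Bk.A y z) * (u * Bk.A (Q.ut x y) (Q.ot z y))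
        = u * u * u * (Bk.A x y * Bk.A y z * Bk.A (Q.ut x y) (Q.ot z y)) := by
          simp [mul_assoc, mul_comm, mul_left_comm]
      _ = u * u * u * (Bk.A x z * Bk.A (Q.ot y x) (Q.ot z x) * Bk.A (Q.ut x z) (Q.ut y z)) := by
          rw [h]
      _ = _ := by simp [mul_assoc, mul_comm, mul_left_comm]
end
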